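/- Let ℓ₁, …, ℓₙ be Lyndon words over a totally ordered alphabet such that ℓ_{i+1} is a prefix of ℓᵢ for each 1 ≤ i ≤ n−1, and suppose ℓₙ has length at least 2 with left standard factorization ℓₙ = ℓₙ′ℓₙ″. Then (ℓ₁⋯ℓ_{n−1}ℓₙ′)^ω < (ℓ₁⋯ℓ_{n−1}ℓₙ)^ω in the lexicographic order on infinite words. -/

import Mathlib

variable {A : Type*} [LinearOrder A] [Inhabited A]

/-- The infinite periodic word `u^ω = uuu⋯`, as a function `ℕ → A`. -/
def omegaPow (u : List A) : ℕ → A := fun n => u.getD (n % u.length) default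

/-- Lexicographic order on infinite words: `s < t` iff at the first position where
they differ, `s` has the smaller letter. -/
def lexLt (s t : ℕ → A) : Prop := ∃ k, (∀ i < k, s i = t i) ∧ s k < t k

/-- A nonempty word `w` is a Lyndon word: `w` is lexicographically smaller than
each of its nonempty proper suffixes. -/
def IsLyndon (w : List A) : Prop :=
  w ≠ [] ∧ ∀ v, v <:+ w → v ≠ [] → v ≠ w → List.Lex (· < ·) w v

/-- `w = uv` is the left standard factorization of `w`: `u` is the longest nonempty
proper prefix of `w` that is a Lyndon word, and `v` the corresponding suffix. -/
def LeftStdFact (w u v : List A) : Prop :=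
  w = u ++ v ∧ u ≠ [] ∧ v ≠ [] ∧ IsLyndon u ∧
    ∀ u', u' <+: w → u' ≠ [] → u' ≠ w → IsLyndon u' → u'.length ≤ u.length

/- ### Auxiliary lemmas -/

/-- If two lists agree (via `getD`) before position `r` and the first is smaller at
position `r` (in range for both), then the first is lexicographically smaller. -/
lemma lex_of_agree_lt : ∀ (a b : List A) (r : ℕ), r < a.length → r < b.length →
    (∀ i < r, a.getD i default = b.getD i default) →
    a.getD r default < b.getD r default → List.Lex (· < ·) a b
  | [], _, r, hra, _, _, _ => absurd hra (by simp)
  | _, [], r, _, hrb, _, _ => absurd hrb (by simp)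
  | x :: a, y :: b, 0, hra, hrb, hag, hlt => by
      simp only [List.getD_cons_zero] at hlt
      exact List.Lex.rel hlt
  | x :: a, y :: b, r + 1, hra, hrb, hag, hlt => by
      have hxy : x = y := by
        have := hag 0 (Nat.succ_pos r)
        simpa using this
      subst hxy
      refine List.Lex.cons ?_
      refine lex_of_agree_lt a b r (by simpa using hra) (by simpa using hrb) ?_ ?_
      · intro i hi
        have := hag (i + 1) (by omega)
        simpa using this
      · simpa using hlt

/-- A strictly shorter prefix is lexicographically smaller. -/
lemma lex_of_proper_prefix : ∀ (a b : List A), a <+: b → a.length < b.length →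
    List.Lex (· < ·) a b
  | [], [], _, hlen => absurd hlen (by simp)
  | [], y :: b, _, _ => List.Lex.nil
  | x :: a, [], h, _ => by
      have := h.length_le; simp at this
  | x :: a, y :: b, h, hlen => by
      obtain ⟨t, ht⟩ := h
      have hx : x = y := by
        have := congrArg (fun l => l.headI) ht
        simpa using this
      subst hx
      have ht' : a ++ t = b := by simpa using ht
      refine List.Lex.cons (lex_of_proper_prefix a b ⟨t, ht'⟩ (by simpa using hlen))

lemma omegaPow_add_self (u : List A) (i : ℕ) :
    omegaPow u (u.length + i) = omegaPow u i := by
  simp [omegaPow, Nat.add_mod_left]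

lemma omegaPow_sub_self (u : List A) (i : ℕ) (h : u.length ≤ i) :
    omegaPow u i = omegaPow u (i - u.length) := by
  have h2 : i = u.length + (i - u.length) := by omega
  conv_lhs => rw [h2]
  rw [omegaPow_add_self]

lemma omegaPow_eq_getD (u : List A) (i : ℕ) (h : i < u.length) :
    omegaPow u i = u.getD i default := by
  simp [omegaPow, Nat.mod_eq_of_lt h]

/-- Key lemma: if `w` is a Lyndon word and `w = uv` with `u, v` nonempty, then
`u^ω` differs first from `w` (within `w`) at a position where `u^ω` is smaller. -/
lemma omegaPow_lt_of_lyndon (w u v : List A) (hw : IsLyndon w) (hu : u ≠ [])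
    (hv : v ≠ []) (heq : w = u ++ v) :
    ∃ m < w.length, (∀ i < m, omegaPow u i = w.getD i default) ∧
      omegaPow u m < w.getD m default := by
  have hul : 0 < u.length := List.length_pos_iff.mpr hu
  have hvl : 0 < v.length := List.length_pos_iff.mpr hv
  have hlen : u.length < w.length := by
    rw [heq, List.length_append]; omega
  -- existence of a difference position
  have hdiff : ∃ i, i < w.length ∧ omegaPow u i ≠ w.getD i default := by
    by_contra hcon
    push_neg at hcon
    set s := w.drop u.length with hs
    have hslen : s.length = w.length - u.length := List.length_drop
    have hsne : s ≠ [] := by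
      intro hnil; rw [hnil] at hslen; simp at hslen; omega
    have hsnw : s ≠ w := by
      intro hsw
      have := congrArg List.length hsw
      rw [hslen] at this; omega
    have hlex : List.Lex (· < ·) w s := hw.2 s (List.drop_suffix _ _) hsne hsnw
    -- s is a prefix of w
    have hpre : s <+: w := by
      have : s = w.take s.length := by
        apply List.ext_getElem
        · rw [List.length_take]; omega
        · intro i hi1 hi2
          have hi : i < w.length - u.length := by omega
          have e1 : s[i] = w[u.length + i]'(by omega) := by
            simp [hs]
          have e2 : (w.take s.length)[i] = w[i]'(by omega) := by simp
          rw [e1, e2]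
          have h1 := hcon (u.length + i) (by omega)
          have h2 := hcon i (by omega)
          rw [omegaPow_add_self] at h1
          rw [h2] at h1
          have g1 : w.getD (u.length + i) default = w[u.length + i]'(by omega) :=
            List.getD_eq_getElem _ _ _
          have g2 : w.getD i default = w[i]'(by omega) := List.getD_eq_getElem _ _ _
          rw [g1, g2] at h1
          exact h1.symm
      rw [this]
      exact List.take_prefix _ _
    have hlex' : List.Lex (· < ·) s w :=
      lex_of_proper_prefix s w hpre (by omega)
    exact (Std.Asymm.asymm _ _ hlex) hlex'
  classical
  obtain ⟨m, ⟨hmlt, hmne⟩, hminraw⟩ :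
      ∃ m, (m < w.length ∧ omegaPow u m ≠ w.getD m default) ∧
        ∀ i < m, ¬(i < w.length ∧ omegaPow u i ≠ w.getD i default) :=
    ⟨Nat.find hdiff, Nat.find_spec hdiff, fun i hi => Nat.find_min hdiff hi⟩
  have hmin : ∀ i < m, omegaPow u i = w.getD i default := by
    intro i hi
    have := hminraw i hi
    push_neg at this
    exact this (by omega)
  refine ⟨m, hmlt, hmin, ?_⟩
  by_contra hnlt
  push_neg at hnlt
  have hwm : w.getD m default < omegaPow u m := lt_of_le_of_ne hnlt (Ne.symm hmne)
  -- m ≥ |u|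
  have hum : u.length ≤ m := by
    by_contra hcon
    push_neg at hcon
    apply hmne
    rw [omegaPow_eq_getD u m hcon, heq, List.getD_append _ _ _ _ hcon]
  set q := m / u.length with hq
  set r := m % u.length with hr
  have hqr : q * u.length + r = m := by
    rw [Nat.mul_comm]; exact Nat.div_add_mod m u.length
  have hrlt : r < u.length := Nat.mod_lt _ hul
  have hq1 : 1 ≤ q := by
    rw [hq]
    exact (Nat.one_le_div_iff hul).mpr hum
  have hq0 : 0 < q * u.length := Nat.mul_pos (by omega) hul
  have hqm : q * u.length ≤ m := by omega
  have hrm : r < m := by omega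
  set s := w.drop (q * u.length) with hs
  have hslen : s.length = w.length - q * u.length := List.length_drop
  have hsne : s ≠ [] := by
    intro hnil; rw [hnil] at hslen; simp at hslen; omega
  have hsnw : s ≠ w := by
    intro hsw
    have := congrArg List.length hsw
    rw [hslen] at this; omega
  have hlex : List.Lex (· < ·) w s := hw.2 s (List.drop_suffix _ _) hsne hsnw
  have hrs : r < s.length := by omega
  -- s agrees with w before r and is smaller at r
  have hsg : ∀ i, i ≤ r → s.getD i default = w.getD (q * u.length + i) default := by
    intro i hi
    have h1 : q * u.length + i < w.length := by omega
    have e1 : s.getD i default = s[i]'(by omega) := List.getD_eq_getElem _ _ _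
    have e2 : s[i]'(by omega) = w[q * u.length + i]'h1 := by simp [hs]
    rw [e1, e2, List.getD_eq_getElem _ _ h1]
  have hlex' : List.Lex (· < ·) s w := by
    refine lex_of_agree_lt s w r hrs (by omega) ?_ ?_
    · intro i hi
      rw [hsg i (by omega)]
      have h2 : omegaPow u (q * u.length + i) = omegaPow u i := by
        simp [omegaPow, Nat.mul_comm q u.length, Nat.mul_add_mod]
      have h3 := hmin (q * u.length + i) (by omega)
      rw [h2] at h3
      rw [← h3]
      exact hmin i (by omega)
    · rw [hsg r le_rfl]
      have hm' : q * u.length + r = m := by omega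
      rw [hm']
      have h4 : omegaPow u m = u.getD r default := by
        simp [omegaPow, ← hr]
      have h5 : omegaPow u r = u.getD r default := omegaPow_eq_getD u r hrlt
      have h6 := hmin r hrm
      rw [h5] at h6
      rw [← h6, ← h4]
      exact hwm
  exact (Std.Asymm.asymm _ _ hlex) hlex'

/-- In a chain of prefixes, later elements are prefixes of earlier ones. -/
lemma prefix_chain_le (L : List (List A))
    (hchain : ∀ i : ℕ, (h : i + 1 < L.length) → (L[i + 1]'h) <+: (L[i]'(Nat.lt_of_succ_lt h))) :
    ∀ j i (hij : i ≤ j) (hj : j < L.length), (L[j]'hj) <+: (L[i]'(by omega)) := by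
  intro j
  induction j with
  | zero => intro i hi hj; obtain rfl : i = 0 := Nat.le_zero.mp hi; exact List.prefix_refl _
  | succ n ih =>
    intro i hi hj
    rcases Nat.eq_or_lt_of_le hi with h | h
    · subst h; exact List.prefix_refl _
    · exact (hchain n hj).trans (ih i (by omega) (by omega))

/-- Let `ℓ₁, …, ℓₙ` be Lyndon words such that `ℓ_{i+1}` is a prefix of `ℓᵢ` for each
`i`, and let `ℓₙ = ℓₙ′ℓₙ″` be the left standard factorization of `ℓₙ` (of length ≥ 2).
Then `(ℓ₁⋯ℓ_{n-1}ℓₙ′)^ω < (ℓ₁⋯ℓ_{n-1}ℓₙ)^ω`. -/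
theorem omegaPow_lt_of_leftStdFact_last (L : List (List A)) (hL : L ≠ [])
    (hLyn : ∀ l ∈ L, IsLyndon l)
    (hchain : ∀ i : ℕ, (h : i + 1 < L.length) → (L[i + 1]'h) <+: (L[i]'(by omega)))
    (ℓ' ℓ'' : List A) (hlen : 2 ≤ L.getLastI.length)
    (hfact : LeftStdFact L.getLastI ℓ' ℓ'') :
    lexLt (omegaPow (L.dropLast.flatten ++ ℓ')) (omegaPow L.flatten) := by
  obtain ⟨heq, hu, hv, _, _⟩ := hfact
  set w := L.getLastI with hwdef
  have hwlast : w = L.getLast hL := by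
    simp [hwdef, List.getLastI_eq_getLast?, List.getLast?_eq_getLast_of_ne_nil hL]
  have hwmem : w ∈ L := hwlast ▸ List.getLast_mem hL
  have hwLyn : IsLyndon w := hLyn w hwmem
  have hul : 0 < ℓ'.length := List.length_pos_iff.mpr hu
  have hvl : 0 < ℓ''.length := List.length_pos_iff.mpr hv
  have hwl : ℓ'.length < w.length := by rw [heq, List.length_append]; omega
  set P := L.dropLast.flatten with hP
  set Q := P ++ ℓ' with hQdef
  -- L.flatten = P ++ w
  have hflat : L.flatten = P ++ w := by
    conv_lhs => rw [← List.dropLast_append_getLast hL]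
    rw [List.flatten_append, ← hwlast]
    simp [hP]
  obtain ⟨m, hm, hag, hlt⟩ := omegaPow_lt_of_lyndon w ℓ' ℓ'' hwLyn hu hv heq
  set R := L.flatten with hR
  have hRlen : R.length = P.length + w.length := by rw [hflat, List.length_append]
  have hQlen : Q.length = P.length + ℓ'.length := by rw [hQdef, List.length_append]
  -- T1 : values of R^ω after P
  have T1 : ∀ i < w.length, omegaPow R (P.length + i) = w.getD i default := by
    intro i hi
    rw [omegaPow_eq_getD R _ (by omega), hflat,
      List.getD_append_right _ _ _ _ (by omega)]
    congr 1
    omega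
  -- T2 : Q^ω and R^ω agree before |P|
  have T2 : ∀ i < P.length, omegaPow Q i = omegaPow R i := by
    intro i hi
    rw [omegaPow_eq_getD Q _ (by omega), omegaPow_eq_getD R _ (by omega),
      hQdef, hflat, List.getD_append _ _ _ _ hi, List.getD_append _ _ _ _ hi]
  -- w is a prefix of P when P is nonempty
  have hwP : P ≠ [] → w <+: P := by
    intro hPne
    have hd : L.dropLast ≠ [] := by
      intro hnil; rw [hP, hnil] at hPne; simp at hPne
    have hdlen : 0 < L.dropLast.length := List.length_pos_iff.mpr hd
    have hLlen : L.dropLast.length = L.length - 1 := List.length_dropLast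
    have h0 : (L.dropLast)[0]'hdlen = L[0]'(by omega) := List.getElem_dropLast _
    have hw0 : w <+: (L[0]'(by omega)) := by
      have := prefix_chain_le L hchain (L.length - 1) 0 (by omega) (by omega)
      rwa [hwlast, List.getLast_eq_getElem]
    have h0P : ((L.dropLast)[0]'hdlen) <+: P := by
      obtain ⟨hd', tl', hdt⟩ := List.exists_cons_of_ne_nil hd
      have hval : (L.dropLast)[0]'hdlen = hd' := by simp [hdt]
      have h1 : hd' <+: P := by
        rw [hP, hdt, List.flatten_cons]
        exact ⟨tl'.flatten, rfl⟩
      rwa [hval]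
    rw [h0] at h0P
    exact hw0.trans h0P
  -- T3 : values of Q^ω after P, up to m
  have T3 : ∀ i ≤ m, omegaPow Q (P.length + i) = omegaPow ℓ' i := by
    intro i hi
    rcases lt_or_ge i ℓ'.length with h | h
    · rw [omegaPow_eq_getD Q _ (by omega), hQdef,
        List.getD_append_right _ _ _ _ (by omega), omegaPow_eq_getD ℓ' _ h]
      congr 1
      omega
    · have e1 : omegaPow Q (P.length + i) = omegaPow Q (i - ℓ'.length) := by
        rw [omegaPow_sub_self Q _ (by omega)]
        congr 1
        omega
      have e2 : omegaPow ℓ' i = omegaPow ℓ' (i - ℓ'.length) :=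
        omegaPow_sub_self ℓ' i h
      rw [e1, e2]
      rcases eq_or_ne P [] with hPnil | hPne
      · rw [hQdef, hPnil]; simp
      · have hwP' := hwP hPne
        have hwPlen : w.length ≤ P.length := hwP'.length_le
        set j := i - ℓ'.length with hj
        have hjm : j < m := by omega
        have hjw : j < w.length := by omega
        rw [omegaPow_eq_getD Q _ (by omega), hag j hjm]
        obtain ⟨t, ht⟩ := hwP'
        rw [hQdef, List.getD_append _ _ _ _ (by omega), ← ht,
          List.getD_append _ _ _ _ (by omega)]
  -- conclusion
  refine ⟨P.length + m, ?_, ?_⟩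
  · intro i hik
    rcases lt_or_ge i P.length with h | h
    · exact T2 i h
    · have hi' : i = P.length + (i - P.length) := by omega
      rw [hi', T3 _ (by omega), T1 _ (by omega)]
      exact hag _ (by omega)
  · rw [T3 m le_rfl, T1 m hm]
    exact hlt
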